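/- For any B-term e there exists a polynomial equivalent to it: i.e., there exist k > 0 and natural numbers n1, …, nk such that e is βη-equivalent to (B^{n1} B) ∘ (B^{n2} B) ∘ … ∘ (B^{nk} B). -/

import Mathlib

/-- Untyped lambda terms in de Bruijn representation. -/
inductive Lam where
  | var : Nat → Lam
  | app : Lam → Lam → Lam
  | lam : Lam → Lam
deriving DecidableEq

namespace Lam

/-- Lift (shift by one) all free variables with index ≥ `c`. -/
def lift (c : Nat) : Lam → Lam
  | var n => if n < c then var n else var (n + 1)
  | app a b => app (lift c a) (lift c b)
  | lam a => lam (lift (c + 1) a)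

/-- Substitute `s` for the free variable with index `d`. -/
def subst (d : Nat) (s : Lam) : Lam → Lam
  | var n => if n = d then s else if d < n then var (n - 1) else var n
  | app a b => app (subst d s a) (subst d s b)
  | lam a => lam (subst (d + 1) (lift 0 s) a)

/-- One-step βη-reduction (compatible closure of β and η). -/
inductive Step : Lam → Lam → Prop
  | beta (a b : Lam) : Step (app (lam a) b) (subst 0 b a)
  | eta (a : Lam) : Step (lam (app (lift 0 a) (var 0))) a
  | appL {a a' : Lam} (b : Lam) : Step a a' → Step (app a b) (app a' b)
  | appR (a : Lam) {b b' : Lam} : Step b b' → Step (app a b) (app a b')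
  | xi {a a' : Lam} : Step a a' → Step (lam a) (lam a')

/-- βη-equivalence: the equivalence relation generated by one-step βη-reduction. -/
def BetaEtaEq (a b : Lam) : Prop := Relation.EqvGen Step a b

/-- The B combinator λf.λg.λx. f (g x). -/
def B : Lam := lam (lam (lam (app (var 2) (app (var 1) (var 0)))))

/-- `flat X n` is the (n+1)-fold flat left application, i.e. `X_(n+1)`:
`flat X 0 = X = X_(1)` and `flat X (n+1) = (flat X n) X = X_(n+2)`. -/
def flat (X : Lam) : Nat → Lam
  | 0 => X
  | n + 1 => app (flat X n) X

end Lam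

open Lam

/-- B-terms: applicative combinations of the single combinator B. -/
inductive IsBTerm : Lam → Prop
  | base : IsBTerm B
  | app {a b : Lam} : IsBTerm a → IsBTerm b → IsBTerm (app a b)

/-- `bpow k e` is the k-fold application B (B (… (B e)…)). -/
def bpow : ℕ → Lam → Lam
  | 0, e => e
  | k + 1, e => app B (bpow k e)

/-- Composition e1 ∘ e2 = B e1 e2. -/
def comp (a b : Lam) : Lam := app (app B a) b

/-- The polynomial (B^{n1} B) ∘ (B^{n2} B) ∘ … ∘ (B^{nk} B) of a nonempty list
of degrees [n1, …, nk]. -/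
def poly : List ℕ → Lam
  | [] => B
  | [n] => bpow n B
  | n :: ns => comp (bpow n B) (poly ns)

/-!
By β, `(a ∘ b) c = a (b c)`, and by η-extensionality `B` distributes over composition:
`B (a ∘ b) = B a ∘ B b`. Hence for a polynomial `P = B^{n₁}B ∘ ⋯ ∘ B^{nₖ}B` and any `Q`,
`P Q = B^{n₁}B (⋯ (B^{nₖ}B Q))`, and one application `B^n B Q` of a monomial to a polynomial
is again a polynomial: for `n = m + 1` it is `B^m B ∘ Q`, and for `n = 0` it is `B Q`, which is
`Q` with every degree raised by one. Induction on B-terms finishes the proof.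
-/

namespace Lam

local infix:50 " =βη " => BetaEtaEq

theorem lift_lift (t : Lam) : ∀ {c d}, d ≤ c → lift d (lift c t) = lift (c + 1) (lift d t) := by
  induction t with
  | var n =>
    intro c d h
    simp only [lift]
    split_ifs <;> simp only [lift] <;> split_ifs <;> first | rfl | omega
  | app a b iha ihb => intro c d h; simp [lift, iha h, ihb h]
  | lam a ih => intro c d h; simp [lift, ih (Nat.succ_le_succ h)]

theorem subst_lift (t : Lam) : ∀ d s, subst d s (lift d t) = t := by
  induction t with
  | var n =>
    intro d s
    simp only [lift]
    split_ifs <;> simp only [subst] <;> split_ifs <;> first | rfl | omega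
  | app a b iha ihb => intro d s; simp [lift, subst, iha, ihb]
  | lam a ih => intro d s; simp [lift, subst, ih]

theorem lift_comp (c : ℕ) (a b : Lam) : lift c (comp a b) = comp (lift c a) (lift c b) := rfl

namespace BetaEtaEq

theorem refl (a : Lam) : a =βη a := Relation.EqvGen.refl a

theorem symm {a b : Lam} (h : a =βη b) : b =βη a := Relation.EqvGen.symm _ _ h

theorem trans {a b c : Lam} (h : a =βη b) (h' : b =βη c) : a =βη c :=
  Relation.EqvGen.trans _ _ _ h h'

theorem of_step {a b : Lam} (h : Step a b) : a =βη b := Relation.EqvGen.rel _ _ h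

instance : Trans BetaEtaEq BetaEtaEq BetaEtaEq := ⟨trans⟩

theorem map {f : Lam → Lam} (hf : ∀ {a b}, Step a b → Step (f a) (f b)) {a b : Lam}
    (h : a =βη b) : f a =βη f b := by
  induction h with
  | rel _ _ h => exact of_step (hf h)
  | refl => exact refl _
  | symm _ _ _ ih => exact ih.symm
  | trans _ _ _ _ _ ih ih' => exact ih.trans ih'

theorem app_left {a a' : Lam} (b : Lam) (h : a =βη a') : app a b =βη app a' b :=
  map (Step.appL b) h

theorem app_right (a : Lam) {b b' : Lam} (h : b =βη b') : app a b =βη app a b' :=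
  map (Step.appR a) h

theorem lam {a a' : Lam} (h : a =βη a') : lam a =βη lam a' :=
  map Step.xi h

theorem app {a a' b b' : Lam} (h : a =βη a') (h' : b =βη b') :
    app a b =βη app a' b' :=
  (app_left b h).trans (app_right a' h')

theorem beta {a b t : Lam} (h : subst 0 b a = t) : .app (.lam a) b =βη t :=
  h ▸ of_step (Step.beta a b)

theorem of_app_var {s t : Lam} (h : .app (lift 0 s) (var 0) =βη .app (lift 0 t) (var 0)) :
    s =βη t :=
  (of_step (Step.eta s)).symm.trans ((lam h).trans (of_step (Step.eta t)))

theorem of_app_var_var {s t : Lam}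
    (h : .app (.app (lift 0 (lift 0 s)) (var 1)) (var 0) =βη
      .app (.app (lift 0 (lift 0 t)) (var 1)) (var 0)) :
    s =βη t :=
  of_app_var (of_app_var h)

end BetaEtaEq

theorem comp_app (a b c : Lam) : app (comp a b) c =βη app a (app b c) :=
  calc app (comp a b) c
      = app (app (app B a) b) c := rfl
    _ =βη app (app (lam (lam (app (lift 0 (lift 0 a)) (app (var 1) (var 0))))) b) c :=
      .app_left c (.app_left b (.beta (by simp [subst])))
    _ =βη app (lam (app (lift 0 a) (app (lift 0 b) (var 0)))) c := by
      refine .app_left c (.beta ?_)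
      simp [subst, lift_lift a le_rfl, subst_lift]
    _ =βη app a (app b c) := .beta (by simp [subst, subst_lift])

theorem B_app_comp (a b : Lam) : app B (comp a b) =βη comp (app B a) (app B b) := by
  refine .of_app_var_var ?_
  simp only [lift, lift_comp]
  set a' := lift 0 (lift 0 a)
  set b' := lift 0 (lift 0 b)
  calc _ =βη app (comp a' b') (app (var 1) (var 0)) := comp_app _ _ _
    _ =βη app a' (app b' (app (var 1) (var 0))) := comp_app _ _ _
    _ =βη app a' (app (comp b' (var 1)) (var 0)) := .app_right _ (comp_app _ _ _).symm
    _ =βη app (comp a' (app (app B b') (var 1))) (var 0) := (comp_app _ _ _).symm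
    _ =βη _ := .app_left _ (comp_app _ _ _).symm

theorem B_app_poly : ∀ {ns : List ℕ}, ns ≠ [] → app B (poly ns) =βη poly (ns.map (· + 1))
  | [_], _ => .refl _
  | _ :: m :: ns, _ =>
    (B_app_comp _ _).trans (.app_right _ (B_app_poly (List.cons_ne_nil m ns)))

theorem poly_cons (n : ℕ) {ns : List ℕ} (h : ns ≠ []) :
    poly (n :: ns) = comp (bpow n B) (poly ns) := by
  cases ns with
  | nil => contradiction
  | cons => rfl

theorem exists_bpow_B_app_poly (n : ℕ) {ms : List ℕ} (hms : ms ≠ []) :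
    ∃ ks, ks ≠ [] ∧ app (bpow n B) (poly ms) =βη poly ks :=
  match n with
  | 0 => ⟨ms.map (· + 1), by simpa using hms, B_app_poly hms⟩
  | n + 1 => ⟨n :: ms, List.cons_ne_nil n ms, poly_cons n hms ▸ .refl _⟩

theorem exists_poly_app_poly : ∀ {ns : List ℕ}, ns ≠ [] → ∀ {ms : List ℕ}, ms ≠ [] →
    ∃ ks, ks ≠ [] ∧ app (poly ns) (poly ms) =βη poly ks
  | [n], _, _, hms => exists_bpow_B_app_poly n hms
  | n :: m :: ns, _, _, hms => by
    obtain ⟨ls, hls, h⟩ := exists_poly_app_poly (List.cons_ne_nil m ns) hms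
    obtain ⟨ks, hks, h'⟩ := exists_bpow_B_app_poly n hls
    exact ⟨ks, hks, (comp_app _ _ _).trans ((BetaEtaEq.app_right _ h).trans h')⟩

end Lam

/-- Every B-term is βη-equivalent to some polynomial
(B^{n1} B) ∘ … ∘ (B^{nk} B) with k > 0. -/
theorem stmt17 (e : Lam) (he : IsBTerm e) :
    ∃ ns : List ℕ, ns ≠ [] ∧ BetaEtaEq e (poly ns) := by
  induction he with
  | base => exact ⟨[0], List.cons_ne_nil 0 [], .refl B⟩
  | app _ _ iha ihb =>
    obtain ⟨ns, hns, ha⟩ := iha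
    obtain ⟨ms, hms, hb⟩ := ihb
    obtain ⟨ks, hks, h⟩ := exists_poly_app_poly hns hms
    exact ⟨ks, hks, (ha.app hb).trans h⟩
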